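/- Let G be a finite simple graph having a free (simplicial) vertex, i.e. a non-isolated vertex v whose neighbourhood N_G(v) induces a clique together with v (equivalently, belonging to exactly one maximal clique). Then v(J(G)) ≤ bight(I(G)) − 1, where bight(I(G)) is the maximum cardinality of a minimal vertex cover of G. In particular this holds for every chordal graph with at least one edge. -/

import Mathlib

open MvPolynomial CategoryTheory

noncomputable section

/-- A set of vertices is a vertex cover if it meets every edge. -/
def IsVertexCover {V : Type} (G : SimpleGraph V) (C : Set V) : Prop :=
  ∀ ⦃u v : V⦄, G.Adj u v → u ∈ C ∨ v ∈ C

/-- A vertex cover minimal with respect to inclusion. -/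
def IsMinimalVertexCover {V : Type} (G : SimpleGraph V) (C : Set V) : Prop :=
  IsVertexCover G C ∧ ∀ C' ⊆ C, IsVertexCover G C' → C' = C

/-- `α₀(G)`: the minimum cardinality of a vertex cover of `G`. -/
def coverNumber {V : Type} (G : SimpleGraph V) : ℕ :=
  sInf {k | ∃ C : Set V, IsVertexCover G C ∧ C.ncard = k}

/-- `bight(I(G))`: the maximum cardinality of a minimal vertex cover of `G`. -/
def bigHeight {V : Type} (G : SimpleGraph V) : ℕ :=
  sSup {k | ∃ C : Set V, IsMinimalVertexCover G C ∧ C.ncard = k}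

/-- The edge ideal `I(G) ⊆ K[x_v : v ∈ V]`, generated by the monomials
`x_u * x_v` over the edges `{u,v}` of `G`. -/
def edgeIdeal (K : Type) [Field K] {V : Type} (G : SimpleGraph V) :
    Ideal (MvPolynomial V K) :=
  Ideal.span {m | ∃ u v : V, G.Adj u v ∧ m = X u * X v}

/-- The cover ideal `J(G) = ⋂_{{u,v} ∈ E(G)} ⟨x_u, x_v⟩`. -/
def coverIdeal (K : Type) [Field K] {V : Type} (G : SimpleGraph V) :
    Ideal (MvPolynomial V K) :=
  ⨅ (u : V) (v : V) (_ : G.Adj u v), Ideal.span {X u, X v}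

/-- The v-number of a graded ideal `I`: the least `d ≥ 0` such that there is a
homogeneous polynomial `f` of degree `d` with `I : f` a prime ideal. -/
def vNumber {K : Type} [Field K] {V : Type} (I : Ideal (MvPolynomial V K)) : ℕ :=
  sInf {d | ∃ f : MvPolynomial V K, f.IsHomogeneous d ∧
    (I.colon (Ideal.span {f})).IsPrime}

/-- The homogeneous maximal ideal `⟨x_1, …, x_n⟩` of the polynomial ring. -/
def maxIdeal (K : Type) [Field K] (V : Type) : Ideal (MvPolynomial V K) :=
  Ideal.span (Set.range (X : V → MvPolynomial V K))

/-- The depth of the module `M` with respect to the ideal `J`: the supremum of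
the lengths of regular sequences on `M` consisting of elements of `J`. -/
def mdepth {R : Type} [CommRing R] (J : Ideal R) (M : Type) [AddCommGroup M]
    [Module R M] : ℕ :=
  sSup {k | ∃ rs : List R, rs.length = k ∧ (∀ r ∈ rs, r ∈ J) ∧
    RingTheory.Sequence.IsRegular M rs}

/-- The projective dimension of an `R`-module `M`, characterized by the
vanishing of `Ext^i(M, N)` for all `i > d` and all modules `N`. -/
def projDim (R : Type) [CommRing R] (M : ModuleCat.{0} R) : ℕ :=
  sInf {d : ℕ | ∀ (N : ModuleCat.{0} R) (i : ℕ), d < i →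
    Subsingleton (((Ext R (ModuleCat.{0} R) i).obj (Opposite.op M)).obj N)}

/-! Let `u` be a neighbour of the free vertex `v` and `S ∋ u` a maximal independent set; its
complement `C` is a minimal vertex cover containing `v`. As `N[v]` is a clique, `vu` is the only
edge inside `S ∪ {v}`, so every other edge has an endpoint in `C \ {v}`. Hence for
`f = ∏_{w ∈ C \ {v}} x_w` the colon `J(G) : f` is the prime `⟨x_v, x_u⟩`, and
`v(J(G)) ≤ deg f = |C| - 1 ≤ bight(I(G)) - 1`. -/

namespace MvPolynomial

variable {σ R : Type*} [CommRing R]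

theorem span_X_image_eq_ker (s : Set σ) [DecidablePred (· ∈ s)] :
    Ideal.span (X '' s : Set (MvPolynomial σ R)) =
      RingHom.ker (aeval fun i => if i ∈ s then 0 else X i :
        MvPolynomial σ R →ₐ[R] MvPolynomial σ R) := by
  set I := Ideal.span (X '' s : Set (MvPolynomial σ R))
  refine le_antisymm (Ideal.span_le.2 ?_) fun p hp => ?_
  · rintro _ ⟨i, hi, rfl⟩
    simp [hi]
  · have hφ : (Ideal.Quotient.mkₐ R I).comp (aeval fun i => if i ∈ s then 0 else X i) =
        Ideal.Quotient.mkₐ R I := by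
      ext i
      by_cases hi : i ∈ s
      · simp only [AlgHom.comp_apply, aeval_X, if_pos hi, map_zero]
        exact (Ideal.Quotient.eq_zero_iff_mem.2
          (Ideal.subset_span (Set.mem_image_of_mem X hi))).symm
      · simp [hi]
    rw [← Ideal.Quotient.eq_zero_iff_mem, ← Ideal.Quotient.mkₐ_eq_mk R, ← hφ,
      AlgHom.comp_apply, RingHom.mem_ker.1 hp, map_zero]

theorem isPrime_span_X_image [IsDomain R] (s : Set σ) :
    (Ideal.span (X '' s : Set (MvPolynomial σ R))).IsPrime := by
  classical
  rw [span_X_image_eq_ker]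
  exact RingHom.ker_isPrime _

theorem X_mem_span_X_image_iff [Nontrivial R] {s : Set σ} {i : σ} :
    (X i : MvPolynomial σ R) ∈ Ideal.span (X '' s) ↔ i ∈ s := by
  classical
  rw [span_X_image_eq_ker, RingHom.mem_ker, aeval_X]
  split_ifs with hi <;> simp [hi, X_ne_zero]

theorem prod_X_mem_span_X_image_iff [IsDomain R] {s : Set σ} {D : Finset σ} :
    ∏ i ∈ D, (X i : MvPolynomial σ R) ∈ Ideal.span (X '' s) ↔ ∃ i ∈ D, i ∈ s := by
  have := isPrime_span_X_image (R := R) s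
  simp only [Ideal.IsPrime.prod_mem_iff, X_mem_span_X_image_iff]

theorem isHomogeneous_prod_X (D : Finset σ) :
    (∏ i ∈ D, X i : MvPolynomial σ R).IsHomogeneous D.card := by
  simpa using IsHomogeneous.prod D X (fun _ => 1) fun i _ => isHomogeneous_X R i

end MvPolynomial

theorem Ideal.colon_span_singleton_iInf_eq {R ι : Type*} [CommRing R] {P : ι → Ideal R}
    {i₀ : ι} (hP : (P i₀).IsPrime) {f : R} (hf : f ∉ P i₀)
    (h : ∀ i, f ∈ P i ∨ P i = P i₀) :
    (⨅ i, P i).colon (Ideal.span {f}) = P i₀ := by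
  ext r
  simp only [Ideal.mem_colon_span_singleton, Ideal.mem_iInf]
  refine ⟨fun hr => (hP.mem_or_mem (hr i₀)).resolve_right hf, fun hr i => ?_⟩
  rcases h i with hfi | hi
  · exact (P i).mul_mem_left r hfi
  · exact hi ▸ (P i₀).mul_mem_right f hr

namespace SimpleGraph

variable {V : Type*} {G : SimpleGraph V} {S : Set V} {u v : V}

theorem IsIndepSet.eq_of_adj_of_isClique (hS : G.IsIndepSet S)
    (hclique : G.IsClique (insert v (G.neighborSet v))) (hu : u ∈ S) (hvu : G.Adj v u) {w : V}
    (hw : w ∈ S) (hvw : G.Adj v w) : w = u := by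
  by_contra hwu
  exact hS hw hu hwu (hclique (Set.mem_insert_of_mem _ hvw) (Set.mem_insert_of_mem _ hvu) hwu)

theorem IsIndepSet.sym2_eq_of_adj_of_isClique (hS : G.IsIndepSet S)
    (hclique : G.IsClique (insert v (G.neighborSet v))) (hu : u ∈ S) (hvu : G.Adj v u) {a b : V}
    (hab : G.Adj a b) (ha : a ∈ insert v S) (hb : b ∈ insert v S) : s(a, b) = s(v, u) := by
  rcases ha with rfl | ha <;> rcases hb with rfl | hb
  · exact (G.irrefl hab).elim
  · rw [hS.eq_of_adj_of_isClique hclique hu hvu hb hab]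
  · rw [hS.eq_of_adj_of_isClique hclique hu hvu ha hab.symm, Sym2.eq_swap]
  · exact absurd hab (hS ha hb hab.ne)

end SimpleGraph

section CoverIdeal

variable {V : Type} {G : SimpleGraph V}

theorem isVertexCover_iff_isIndepSet_compl {C : Set V} :
    IsVertexCover G C ↔ G.IsIndepSet Cᶜ := by
  refine ⟨fun h a ha b hb _ hab => (h hab).elim ha hb, fun h a b hab => ?_⟩
  by_contra! hab'
  exact h hab'.1 hab'.2 hab.ne hab

theorem isMinimalVertexCover_iff_maximal_isIndepSet_compl {C : Set V} :
    IsMinimalVertexCover G C ↔ Maximal G.IsIndepSet Cᶜ := by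
  simp only [IsMinimalVertexCover, Maximal, isVertexCover_iff_isIndepSet_compl]
  refine and_congr_right fun _ => ⟨fun h t ht hCt => ?_, fun h C' hC' hcov => ?_⟩
  · rw [← compl_compl t, h tᶜ (Set.compl_subset_comm.1 hCt) (by rwa [compl_compl])]
  · exact hC'.antisymm (Set.compl_subset_compl.1 (h hcov (Set.compl_subset_compl.2 hC')))

theorem ncard_le_bigHeight [Finite V] {C : Set V} (hC : IsMinimalVertexCover G C) :
    C.ncard ≤ bigHeight G :=
  le_csSup (s := {k | ∃ C : Set V, IsMinimalVertexCover G C ∧ C.ncard = k})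
    ⟨Nat.card V, by rintro k ⟨C', -, rfl⟩; exact Set.ncard_le_card C'⟩ ⟨C, hC, rfl⟩

theorem coverIdeal_eq_iInf_dart (K : Type) [Field K] :
    coverIdeal K G =
      ⨅ d : G.Dart, Ideal.span (X '' {d.fst, d.snd} : Set (MvPolynomial V K)) := by
  ext p
  simp only [coverIdeal, Set.image_pair, Ideal.mem_iInf]
  exact ⟨fun h d => h _ _ d.adj, fun h a b hab => h ⟨(a, b), hab⟩⟩

theorem coverIdeal_colon_prod_X_eq (K : Type) [Field K] {S : Set V} {u v : V}
    (hS : G.IsIndepSet S) (hclique : G.IsClique (insert v (G.neighborSet v))) (hu : u ∈ S)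
    (hvu : G.Adj v u) {D : Finset V} (hD : (D : Set V) = (insert v S)ᶜ) :
    (coverIdeal K G).colon (Ideal.span {∏ i ∈ D, (X i : MvPolynomial V K)}) =
      Ideal.span (X '' {v, u} : Set (MvPolynomial V K)) := by
  rw [coverIdeal_eq_iInf_dart]
  refine Ideal.colon_span_singleton_iInf_eq
    (P := fun d : G.Dart => Ideal.span (X '' {d.fst, d.snd} : Set (MvPolynomial V K)))
    (i₀ := ⟨(v, u), hvu⟩) (isPrime_span_X_image _) ?_ fun d => ?_
  · rw [prod_X_mem_span_X_image_iff]
    rintro ⟨i, hiD, hi⟩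
    have hi' : i ∉ insert v S := by rwa [← Finset.mem_coe, hD] at hiD
    rcases hi with rfl | rfl
    exacts [hi' (Set.mem_insert _ _), hi' (Set.mem_insert_of_mem _ hu)]
  · dsimp only
    by_cases hd : d.fst ∈ insert v S ∧ d.snd ∈ insert v S
    · right
      rw [Set.pair_eq_pair_iff.2 (Sym2.eq_iff.1
        (hS.sym2_eq_of_adj_of_isClique hclique hu hvu d.adj hd.1 hd.2))]
    · left
      rw [prod_X_mem_span_X_image_iff]
      simp only [← Finset.mem_coe, hD, Set.mem_compl_iff]
      rw [not_and_or] at hd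
      rcases hd with hd | hd
      exacts [⟨d.fst, hd, by simp⟩, ⟨d.snd, hd, by simp⟩]

end CoverIdeal

theorem vNumber_coverIdeal_le_bigHeight_sub_one_of_free_vertex_general
    {K : Type} [Field K] {n : ℕ} (G : SimpleGraph (Fin n))
    (v : Fin n) (hv : (G.neighborSet v).Nonempty)
    (hclique : G.IsClique (insert v (G.neighborSet v))) :
    vNumber (coverIdeal K G) ≤ bigHeight G - 1 := by
  classical
  obtain ⟨u, hvu⟩ := hv
  obtain ⟨S, huS, hS⟩ := Finite.exists_le_maximal (p := G.IsIndepSet) (a := {u})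
    (Set.pairwise_singleton _ _)
  have hu : u ∈ S := huS rfl
  have hvS : v ∈ Sᶜ := fun hv => hS.prop hv hu hvu.ne hvu
  set D := (insert v S)ᶜ.toFinset
  have hD : (D : Set (Fin n)) = (insert v S)ᶜ := Set.coe_toFinset _
  have hcard : D.card + 1 = Sᶜ.ncard := by
    rw [← Set.ncard_coe_finset, hD, ← Set.ncard_sdiff_singleton_add_one hvS, Set.insert_eq,
      Set.compl_union, Set.sdiff_eq, Set.inter_comm]
  have hcolon := coverIdeal_colon_prod_X_eq K hS.prop hclique hu hvu hD
  have hvNumber : vNumber (coverIdeal K G) ≤ D.card :=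
    Nat.sInf_le ⟨_, isHomogeneous_prod_X D, hcolon ▸ isPrime_span_X_image _⟩
  have hbigHeight := ncard_le_bigHeight
    (isMinimalVertexCover_iff_maximal_isIndepSet_compl.2 (by rwa [compl_compl]))
  omega

/-- If `G` has a free (simplicial) vertex, that is a non-isolated vertex `v`
such that `N_G[v]` is a clique, then `v(J(G)) ≤ bight(I(G)) - 1`. -/
theorem vNumber_coverIdeal_le_bigHeight_sub_one_of_free_vertex
    {K : Type} [Field K] {n : ℕ} (hn : 1 ≤ n) (G : SimpleGraph (Fin n))
    (v : Fin n) (hv : (G.neighborSet v).Nonempty)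
    (hclique : G.IsClique (insert v (G.neighborSet v))) :
    vNumber (coverIdeal K G) ≤ bigHeight G - 1 :=
  vNumber_coverIdeal_le_bigHeight_sub_one_of_free_vertex_general G v hv hclique

end
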